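/- For binary rooted tree shapes T1 and T2 with the same number n of leaves, the minimum Robinson–Foulds distance over all bijective leaf labellings equals 4n − 2 − 2μ(T1, T2). -/

import Mathlib

/-- A rooted tree shape on a finite vertex type, given by a parent function.
The root is its own parent, and every vertex reaches the root by iterating
the parent function (this forbids cycles away from the root). -/
structure RTree where
  V : Type
  [fin : Fintype V]
  [deq : DecidableEq V]
  root : V
  parent : V → V
  parent_root : parent root = root
  reaches_root : ∀ v : V, ∃ n : ℕ, parent^[n] v = root

attribute [instance] RTree.fin RTree.deq

namespace RTree

/-- `u` is a descendant of `v` (every vertex is a descendant of itself). -/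
def Desc (T : RTree) (u v : T.V) : Prop := ∃ n : ℕ, T.parent^[n] u = v

/-- A leaf is a vertex with no children. -/
def IsLeaf (T : RTree) (v : T.V) : Prop := ∀ u : T.V, u ≠ v → T.parent u ≠ v

def leafSet (T : RTree) : Set T.V := {v | T.IsLeaf v}

/-- The size (number of leaves) of the tree. -/
noncomputable def nLeaves (T : RTree) : ℕ := T.leafSet.ncard

/-- The size of a vertex: the number of leaves of the subtree rooted at it. -/
noncomputable def sz (T : RTree) (v : T.V) : ℕ := {l | T.IsLeaf l ∧ T.Desc l v}.ncard

/-- Two vertices are incomparable if neither is an ancestor of the other. -/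
def Incomp (T : RTree) (u v : T.V) : Prop := ¬ T.Desc u v ∧ ¬ T.Desc v u

def children (T : RTree) (v : T.V) : Set T.V := {u | T.parent u = v ∧ u ≠ v}

/-- The number of vertices of the tree. -/
noncomputable def nVerts (T : RTree) : ℕ := Nat.card T.V

/-- A binary tree shape: every internal vertex has exactly two children. -/
def IsBinary (T : RTree) : Prop := ∀ v : T.V, ¬ T.IsLeaf v → (T.children v).ncard = 2

end RTree

/-- A consistent cluster matching between two tree shapes: a set of pairs of
vertices in which each vertex occurs at most once, matched vertices root
subtrees with equally many leaves (M1), and incomparability is preserved in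
both directions (M2). -/
def ConsistentMatching (T1 T2 : RTree) (M : Set (T1.V × T2.V)) : Prop :=
  (∀ p ∈ M, ∀ q ∈ M, (p.1 = q.1 ∨ p.2 = q.2) → p = q) ∧
  (∀ p ∈ M, T1.sz p.1 = T2.sz p.2) ∧
  (∀ p ∈ M, ∀ q ∈ M, (T1.Incomp p.1 q.1 ↔ T2.Incomp p.2 q.2))

/-- The maximum cardinality of a consistent cluster matching. -/
noncomputable def mu (T1 T2 : RTree) : ℕ :=
  sSup {n | ∃ M : Set (T1.V × T2.V), ConsistentMatching T1 T2 M ∧ M.ncard = n}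

/-- The set of clusters of a tree under a leaf labelling `φ`. -/
def clusterSet (T : RTree) {X : Type} (φ : T.V → X) : Set (Set X) :=
  {C | ∃ u : T.V, C = φ '' {l | T.IsLeaf l ∧ T.Desc l u}}

/-- The Robinson–Foulds distance of two labelled trees: the cardinality of the
symmetric difference of their cluster sets. -/
noncomputable def dRF (T1 T2 : RTree) {X : Type} (φ1 : T1.V → X) (φ2 : T2.V → X) : ℕ :=
  ((clusterSet T1 φ1 \ clusterSet T2 φ2) ∪ (clusterSet T2 φ2 \ clusterSet T1 φ1)).ncard

/-- The extension of the Robinson–Foulds distance to tree shapes: the minimum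
over all pairs of bijective leaf labellings by a common label set. -/
noncomputable def dRFstar (T1 T2 : RTree) : ℕ :=
  sInf {d | ∃ φ1 : T1.V → Fin T1.nLeaves, ∃ φ2 : T2.V → Fin T1.nLeaves,
    Set.BijOn φ1 T1.leafSet Set.univ ∧ Set.BijOn φ2 T2.leafSet Set.univ ∧
    d = dRF T1 T2 φ1 φ2}

/-!
In a binary tree distinct vertices have distinct clusters, so under bijective leaf labellings
each tree has `2n - 1` clusters and `dRF = 4n - 2 - 2c`, where `c` is the number of common
clusters. The pairs of vertices carrying a common cluster form a consistent matching, so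
`c ≤ μ`. Conversely, the clusters of a maximum consistent matching form a laminar family whose
inclusions and disjointnesses are mirrored in the other tree; such a family is realized by a
single bijection between the leaf sets, and labelling through it makes all `μ` matched pairs
common clusters.
-/

open Set Function
open scoped symmDiff

theorem Set.Finite.exists_bijOn_of_ncard_eq {α β : Type*} [Nonempty β] {s : Set α} {t : Set β}
    (hs : s.Finite) (ht : t.Finite) (h : s.ncard = t.ncard) : ∃ f, BijOn f s t :=
  hs.exists_bijOn_of_encard_eq (by rw [← hs.cast_ncard_eq, ← ht.cast_ncard_eq, h])

theorem Set.BijOn.piecewise_sdiff {α β : Type*} {f g : α → β} {s₁ s : Set α}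
    {t₁ t : Set β} [∀ x, Decidable (x ∈ s₁)] (hs : s₁ ⊆ s) (ht : t₁ ⊆ t)
    (hf : BijOn f s₁ t₁) (hg : BijOn g (s \ s₁) (t \ t₁)) :
    BijOn (s₁.piecewise f g) s t := by
  have h₁ : BijOn (s₁.piecewise f g) s₁ t₁ := hf.congr (piecewise_eqOn s₁ f g).symm
  have h₂ : BijOn (s₁.piecewise f g) (s \ s₁) (t \ t₁) :=
    hg.congr ((piecewise_eqOn_compl s₁ f g).mono (sdiff_subset_compl _ _)).symm
  have hinj : InjOn (s₁.piecewise f g) (s₁ ∪ s \ s₁) :=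
    (injOn_union disjoint_sdiff_right).2
      ⟨h₁.injOn, h₂.injOn, fun x hx y hy hxy => (h₂.mapsTo hy).2 (hxy ▸ h₁.mapsTo hx)⟩
  simpa [union_sdiff_cancel hs, union_sdiff_cancel ht] using h₁.union h₂ hinj

theorem Set.ncard_symmDiff_add_two_mul_ncard_inter {α : Type*} {s t : Set α} (hs : s.Finite)
    (ht : t.Finite) : (s ∆ t).ncard + 2 * (s ∩ t).ncard = s.ncard + t.ncard := by
  rw [Set.symmDiff_def, ncard_union_eq disjoint_sdiff_sdiff hs.sdiff ht.sdiff]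
  have hs' := ncard_inter_add_ncard_sdiff_eq_ncard s t hs
  have ht' := ncard_inter_add_ncard_sdiff_eq_ncard t s ht
  rw [inter_comm] at ht'
  omega

theorem Set.InjOn.disjoint_image_iff {α β : Type*} {f : α → β} {s t u : Set α}
    (hf : InjOn f u) (hs : s ⊆ u) (ht : t ⊆ u) : Disjoint (f '' s) (f '' t) ↔ Disjoint s t :=
  ⟨Disjoint.of_image, fun h => h.image hf hs ht⟩

structure LaminarCorrespondence {α β : Type*} (S : Set (Set α × Set β)) : Prop where
  laminar : ∀ p ∈ S, ∀ q ∈ S, p.1 ⊆ q.1 ∨ q.1 ⊆ p.1 ∨ Disjoint p.1 q.1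
  subset : ∀ p ∈ S, ∀ q ∈ S, p.1 ⊆ q.1 → p.2 ⊆ q.2
  disjoint : ∀ p ∈ S, ∀ q ∈ S, Disjoint p.1 q.1 → Disjoint p.2 q.2

namespace LaminarCorrespondence

variable {α β : Type*}

lemma mono {S S' : Set (Set α × Set β)} (h : LaminarCorrespondence S) (hS : S' ⊆ S) :
    LaminarCorrespondence S' where
  laminar p hp q hq := h.laminar p (hS hp) q (hS hq)
  subset p hp q hq := h.subset p (hS hp) q (hS hq)
  disjoint p hp q hq := h.disjoint p (hS hp) q (hS hq)

lemma subset_or_disjoint_of_ncard_le {S : Set (Set α × Set β)} (hS : LaminarCorrespondence S)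
    {p p₀ : Set α × Set β} (hp : p ∈ S) (hp₀ : p₀ ∈ S) (hfin : p.1.Finite)
    (hle : p.1.ncard ≤ p₀.1.ncard) : p.1 ⊆ p₀.1 ∨ Disjoint p.1 p₀.1 := by
  rcases hS.laminar p hp p₀ hp₀ with h | h | h
  · exact .inl h
  · exact .inl (eq_of_subset_of_ncard_le h hle hfin).symm.subset
  · exact .inr h

/-- Split off a pair `p₀` whose first set is largest: every other pair lies inside it or outside
it, and the two halves are realized separately. -/
theorem exists_bijOn [Nonempty β] (S : Finset (Set α × Set β)) {L₁ : Set α} {L₂ : Set β}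
    (hS : LaminarCorrespondence (S : Set (Set α × Set β))) (hL₁ : L₁.Finite)
    (hL₂ : L₂.Finite) (hL : L₁.ncard = L₂.ncard)
    (hsub : ∀ p ∈ S, p.1 ⊆ L₁ ∧ p.2 ⊆ L₂)
    (hcard : ∀ p ∈ S, p.1.ncard = p.2.ncard) :
    ∃ f : α → β, BijOn f L₁ L₂ ∧ ∀ p ∈ S, f '' p.1 = p.2 := by
  classical
  induction S using Finset.strongInduction generalizing L₁ L₂ with
  | H S ih =>
  rcases S.eq_empty_or_nonempty with rfl | hne
  · obtain ⟨f, hf⟩ := hL₁.exists_bijOn_of_ncard_eq hL₂ hL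
    exact ⟨f, hf, by simp⟩
  obtain ⟨p₀, hp₀, hmax⟩ := S.exists_max_image (fun p => p.1.ncard) hne
  obtain ⟨hA, hB⟩ := hsub p₀ hp₀
  set Sin := (S.erase p₀).filter (·.1 ⊆ p₀.1)
  set Sout := (S.erase p₀).filter (¬ ·.1 ⊆ p₀.1)
  have hin : Sin ⊂ S := (Finset.filter_subset _ _).trans_ssubset (Finset.erase_ssubset hp₀)
  have hout : Sout ⊂ S := (Finset.filter_subset _ _).trans_ssubset (Finset.erase_ssubset hp₀)
  have hdisj : ∀ p ∈ Sout, Disjoint p.1 p₀.1 := fun p hp =>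
    (hS.subset_or_disjoint_of_ncard_le (hout.subset hp) hp₀
      (hL₁.subset (hsub p (hout.subset hp)).1) (hmax p (hout.subset hp))).resolve_left
      (Finset.mem_filter.1 hp).2
  obtain ⟨f, hf, hfS⟩ := ih Sin hin (hS.mono (by exact_mod_cast hin.subset))
    (hL₁.subset hA) (hL₂.subset hB) (hcard p₀ hp₀)
    (fun p hp => ⟨(Finset.mem_filter.1 hp).2,
      hS.subset p (hin.subset hp) p₀ hp₀ (Finset.mem_filter.1 hp).2⟩)
    (fun p hp => hcard p (hin.subset hp))
  obtain ⟨g, hg, hgS⟩ := ih Sout hout (hS.mono (by exact_mod_cast hout.subset))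
    hL₁.sdiff hL₂.sdiff
    (by rw [ncard_sdiff hA (hL₁.subset hA), ncard_sdiff hB (hL₂.subset hB), hL,
      hcard p₀ hp₀])
    (fun p hp => ⟨subset_sdiff.2 ⟨(hsub p (hout.subset hp)).1, hdisj p hp⟩,
      subset_sdiff.2 ⟨(hsub p (hout.subset hp)).2,
        hS.disjoint p (hout.subset hp) p₀ hp₀ (hdisj p hp)⟩⟩)
    (fun p hp => hcard p (hout.subset hp))
  refine ⟨p₀.1.piecewise f g, hf.piecewise_sdiff hA hB hg, fun p hp => ?_⟩
  by_cases hp₁ : p.1 ⊆ p₀.1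
  · rw [((piecewise_eqOn _ f g).mono hp₁).image_eq]
    rcases eq_or_ne p p₀ with rfl | hne
    · exact hf.image_eq
    · exact hfS p (Finset.mem_filter.2 ⟨Finset.mem_erase.2 ⟨hne, hp⟩, hp₁⟩)
  · have hpout : p ∈ Sout := Finset.mem_filter.2
      ⟨Finset.mem_erase.2 ⟨by rintro rfl; exact hp₁ subset_rfl, hp⟩, hp₁⟩
    rw [((piecewise_eqOn_compl _ f g).mono (hdisj p hpout).subset_compl_right).image_eq]
    exact hgS p hpout

end LaminarCorrespondence

namespace RTree

variable {T : RTree}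

lemma desc_refl (u : T.V) : T.Desc u u := ⟨0, rfl⟩

lemma desc_parent (u : T.V) : T.Desc u (T.parent u) := ⟨1, rfl⟩

lemma Desc.trans {u v w : T.V} (huv : T.Desc u v) (hvw : T.Desc v w) : T.Desc u w := by
  obtain ⟨a, rfl⟩ := huv
  obtain ⟨b, rfl⟩ := hvw
  exact ⟨b + a, iterate_add_apply _ _ _ _⟩

lemma eq_root_of_isPeriodicPt {u : T.V} {n : ℕ} (hn : 0 < n)
    (hu : IsPeriodicPt T.parent n u) : u = T.root := by
  obtain ⟨m, hm⟩ := T.reaches_root u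
  have hnm : n * m = (n * m - m) + m := (Nat.sub_add_cancel (Nat.le_mul_of_pos_left m hn)).symm
  calc u = T.parent^[n * m] u := (hu.mul_const m).eq.symm
    _ = T.root := by rw [hnm, iterate_add_apply, hm, iterate_fixed T.parent_root]

lemma parent_ne_self {u : T.V} (hu : u ≠ T.root) : T.parent u ≠ u :=
  fun h => hu (eq_root_of_isPeriodicPt one_pos ((show IsFixedPt T.parent u from h).isPeriodicPt 1))

lemma Desc.antisymm {u v : T.V} (huv : T.Desc u v) (hvu : T.Desc v u) : u = v := by
  obtain ⟨a, rfl⟩ := huv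
  obtain ⟨b, hb⟩ := hvu
  rcases Nat.eq_zero_or_pos a with rfl | ha
  · rfl
  have hu : u = T.root := eq_root_of_isPeriodicPt (n := b + a) (by omega)
    (by rw [IsPeriodicPt, IsFixedPt, iterate_add_apply, hb])
  subst hu
  exact (iterate_fixed T.parent_root a).symm

lemma Desc.total_of_desc {l u v : T.V} (hu : T.Desc l u) (hv : T.Desc l v) :
    T.Desc u v ∨ T.Desc v u := by
  obtain ⟨a, rfl⟩ := hu
  obtain ⟨b, rfl⟩ := hv
  rcases le_total a b with h | h
  · exact .inl ⟨b - a, by rw [← iterate_add_apply, Nat.sub_add_cancel h]⟩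
  · exact .inr ⟨a - b, by rw [← iterate_add_apply, Nat.sub_add_cancel h]⟩

lemma Desc.parent_desc {u v : T.V} (h : T.Desc u v) (hne : u ≠ v) : T.Desc (T.parent u) v := by
  obtain ⟨_ | k, rfl⟩ := h
  · exact absurd rfl hne
  · exact ⟨k, rfl⟩

lemma exists_mem_children_desc {x v : T.V} (h : T.Desc x v) (hne : x ≠ v) :
    ∃ c ∈ T.children v, T.Desc x c := by
  obtain ⟨k, hk⟩ := h
  induction k generalizing x with
  | zero => exact absurd hk hne
  | succ k ih =>
    by_cases hp : T.parent x = v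
    · exact ⟨x, ⟨hp, hne⟩, desc_refl x⟩
    · obtain ⟨c, hc, hxc⟩ := ih hp hk
      exact ⟨c, hc, (desc_parent x).trans hxc⟩

lemma not_isLeaf_of_mem_children {c v : T.V} (hc : c ∈ T.children v) : ¬ T.IsLeaf v :=
  fun hl => hl c hc.2 hc.1

lemma eq_of_mem_children_of_desc {c c' v : T.V} (hc : c ∈ T.children v)
    (hc' : c' ∈ T.children v) (h : T.Desc c c') : c = c' := by
  by_contra hne
  have hvc' : T.Desc v c' := hc.1 ▸ h.parent_desc hne
  exact hc'.2 (hvc'.antisymm ⟨1, hc'.1⟩).symm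

abbrev descOrder (T : RTree) : PartialOrder T.V where
  le := T.Desc
  le_refl := desc_refl
  le_trans _ _ _ := Desc.trans
  le_antisymm _ _ := Desc.antisymm

lemma exists_isLeaf_desc (v : T.V) : ∃ l, T.IsLeaf l ∧ T.Desc l v := by
  let := T.descOrder
  obtain ⟨l, hlv, -, hmin⟩ := exists_minimal_le_of_wellFoundedLT (fun _ => True) v trivial
  exact ⟨l, fun c hne hc => hne (Desc.antisymm ⟨1, hc⟩ (hmin trivial ⟨1, hc⟩)), hlv⟩

variable (T) in
def cluster (v : T.V) : Set T.V := {l | T.IsLeaf l ∧ T.Desc l v}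

lemma sz_eq_ncard_cluster (v : T.V) : T.sz v = (T.cluster v).ncard := rfl

lemma cluster_subset_leafSet (v : T.V) : T.cluster v ⊆ T.leafSet := fun _ hl => hl.1

lemma cluster_nonempty (v : T.V) : (T.cluster v).Nonempty := exists_isLeaf_desc v

lemma Desc.cluster_subset {u v : T.V} (h : T.Desc u v) : T.cluster u ⊆ T.cluster v :=
  fun _ hl => ⟨hl.1, hl.2.trans h⟩

lemma desc_total_of_not_disjoint {u v : T.V} (h : ¬ Disjoint (T.cluster u) (T.cluster v)) :
    T.Desc u v ∨ T.Desc v u := by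
  obtain ⟨l, hu, hv⟩ := not_disjoint_iff.1 h
  exact hu.2.total_of_desc hv.2

lemma incomp_iff_disjoint_cluster {u v : T.V} :
    T.Incomp u v ↔ Disjoint (T.cluster u) (T.cluster v) := by
  refine ⟨fun h => ?_, fun h => ⟨fun huv => ?_, fun hvu => ?_⟩⟩
  · by_contra hd
    rcases desc_total_of_not_disjoint hd with h' | h'
    exacts [h.1 h', h.2 h']
  · obtain ⟨l, hl⟩ := cluster_nonempty u
    exact disjoint_left.1 h hl (huv.cluster_subset hl)
  · obtain ⟨l, hl⟩ := cluster_nonempty v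
    exact disjoint_left.1 h (hvu.cluster_subset hl) hl

lemma cluster_laminar (u v : T.V) :
    T.cluster u ⊆ T.cluster v ∨ T.cluster v ⊆ T.cluster u ∨
      Disjoint (T.cluster u) (T.cluster v) := by
  by_cases h : Disjoint (T.cluster u) (T.cluster v)
  · exact .inr (.inr h)
  · rcases desc_total_of_not_disjoint h with h' | h'
    exacts [.inl h'.cluster_subset, .inr (.inl h'.cluster_subset)]

lemma cluster_ssubset_of_desc {u v : T.V} (hv : 1 < (T.children v).ncard) (h : T.Desc u v)
    (hne : u ≠ v) : T.cluster u ⊂ T.cluster v := by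
  obtain ⟨c, hc, huc⟩ := exists_mem_children_desc h hne
  obtain ⟨c', hc', hc'c⟩ := exists_ne_of_one_lt_ncard hv c
  obtain ⟨l, hl, hlc'⟩ := exists_isLeaf_desc c'
  refine h.cluster_subset.ssubset_of_not_subset fun hsub => ?_
  have hlu : T.Desc l u := (hsub ⟨hl, hlc'.trans ⟨1, hc'.1⟩⟩).2
  rcases (hlu.trans huc).total_of_desc hlc' with hcc' | hc'c'
  exacts [hc'c (eq_of_mem_children_of_desc hc hc' hcc').symm,
    hc'c (eq_of_mem_children_of_desc hc' hc hc'c')]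

lemma IsLeaf.children_eq_empty {v : T.V} (hv : T.IsLeaf v) : T.children v = ∅ :=
  eq_empty_of_forall_notMem fun u hu => hv u hu.2 hu.1

lemma sum_ncard_children : ∑ v, (T.children v).ncard = Fintype.card T.V - 1 := by
  classical
  have hfiber : ∀ v, T.children v = ↑((Finset.univ.erase T.root).filter (T.parent · = v)) := by
    intro v
    ext u
    simp only [children, Finset.coe_filter, Finset.mem_erase, Finset.mem_univ, and_true,
      mem_ofPred_eq]
    constructor
    · rintro ⟨hp, hne⟩
      refine ⟨fun hu => hne ?_, hp⟩
      rw [← hp, hu, T.parent_root]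
    · rintro ⟨hu, hp⟩
      exact ⟨hp, fun huv => parent_ne_self hu (hp.trans huv.symm)⟩
  simp_rw [hfiber, ncard_coe_finset]
  rw [← Finset.card_eq_sum_card_fiberwise (fun _ _ => Finset.mem_univ _),
    Finset.card_erase_of_mem (Finset.mem_univ _), Finset.card_univ]

namespace IsBinary

lemma cluster_ssubset (hb : T.IsBinary) {u v : T.V} (h : T.Desc u v) (hne : u ≠ v) :
    T.cluster u ⊂ T.cluster v := by
  obtain ⟨c, hc, -⟩ := exists_mem_children_desc h hne
  refine cluster_ssubset_of_desc ?_ h hne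
  rw [hb v (not_isLeaf_of_mem_children hc)]
  norm_num

lemma sz_lt (hb : T.IsBinary) {u v : T.V} (h : T.Desc u v) (hne : u ≠ v) : T.sz u < T.sz v :=
  ncard_lt_ncard (hb.cluster_ssubset h hne)

lemma cluster_subset_cluster_iff (hb : T.IsBinary) {u v : T.V} :
    T.cluster u ⊆ T.cluster v ↔ T.Desc u v := by
  refine ⟨fun hsub => ?_, Desc.cluster_subset⟩
  obtain ⟨l, hl⟩ := cluster_nonempty u
  rcases desc_total_of_not_disjoint (not_disjoint_iff.2 ⟨l, hl, hsub hl⟩) with h | h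
  · exact h
  · by_contra hne
    exact (hb.cluster_ssubset h fun hvu => hne (hvu ▸ desc_refl v)).not_subset hsub

lemma cluster_injective (hb : T.IsBinary) : Injective T.cluster := fun _ _ h =>
  (hb.cluster_subset_cluster_iff.1 h.subset).antisymm
    (hb.cluster_subset_cluster_iff.1 h.symm.subset)

/-- Every vertex but the root is a child, and internal vertices have two children each. -/
lemma card_add_one (hb : T.IsBinary) : Fintype.card T.V + 1 = 2 * T.nLeaves := by
  classical
  have hterm : ∀ v, (T.children v).ncard + (if T.IsLeaf v then 2 else 0) = 2 := by
    intro v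
    by_cases hv : T.IsLeaf v
    · simp [hv, hv.children_eq_empty]
    · simp [hv, hb v hv]
  have hsum := Finset.sum_congr rfl (fun v (_ : v ∈ Finset.univ) => hterm v)
  rw [Finset.sum_add_distrib, sum_ncard_children, Finset.sum_ite, Finset.sum_const_zero,
    Finset.sum_const, Finset.sum_const, smul_eq_mul, smul_eq_mul, Finset.card_univ] at hsum
  have hleaves : T.nLeaves = (Finset.univ.filter fun v => T.IsLeaf v).card := by
    rw [nLeaves, ← ncard_coe_finset, Finset.coe_filter]
    simp [leafSet]
  have hpos : 0 < Fintype.card T.V := Fintype.card_pos_iff.2 ⟨T.root⟩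
  omega

end IsBinary

variable {X : Type}

lemma nLeaves_pos (T : RTree) : 0 < T.nLeaves :=
  (ncard_pos (toFinite _)).2 ((cluster_nonempty T.root).mono (cluster_subset_leafSet _))

lemma clusterSet_eq_range (T : RTree) (φ : T.V → X) :
    clusterSet T φ = range fun u => φ '' T.cluster u := by
  ext C
  simp [clusterSet, cluster, eq_comm]

lemma clusterSet_finite (T : RTree) (φ : T.V → X) : (clusterSet T φ).Finite := by
  rw [clusterSet_eq_range]
  exact finite_range _

lemma IsBinary.injective_image_cluster (hb : T.IsBinary) {φ : T.V → X}
    (hφ : InjOn φ T.leafSet) : Injective fun u => φ '' T.cluster u := fun u v h =>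
  hb.cluster_injective
    ((hφ.image_eq_image_iff (cluster_subset_leafSet u) (cluster_subset_leafSet v)).1 h)

lemma IsBinary.ncard_clusterSet (hb : T.IsBinary) {φ : T.V → X} (hφ : InjOn φ T.leafSet) :
    (clusterSet T φ).ncard = Fintype.card T.V := by
  rw [clusterSet_eq_range, ← image_univ,
    ncard_image_of_injective _ (hb.injective_image_cluster hφ), ncard_univ,
    Nat.card_eq_fintype_card]

end RTree

open RTree

section Matchings

variable {T1 T2 : RTree} {X : Type}

variable (T1 T2) in
def agreeingPairs (φ1 : T1.V → X) (φ2 : T2.V → X) : Set (T1.V × T2.V) :=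
  {p | φ1 '' T1.cluster p.1 = φ2 '' T2.cluster p.2}

variable {φ1 : T1.V → X} {φ2 : T2.V → X}

lemma consistentMatching_agreeingPairs (hb1 : T1.IsBinary) (hb2 : T2.IsBinary)
    (hφ1 : InjOn φ1 T1.leafSet) (hφ2 : InjOn φ2 T2.leafSet) :
    ConsistentMatching T1 T2 (agreeingPairs T1 T2 φ1 φ2) := by
  refine ⟨fun p hp q hq h => ?_, fun p hp => ?_, fun p hp q hq => ?_⟩
  · rcases h with h | h
    · exact Prod.ext h (hb2.injective_image_cluster hφ2 (hp.symm.trans (by rw [h]; exact hq)))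
    · exact Prod.ext (hb1.injective_image_cluster hφ1 (hp.trans (by rw [h]; exact hq.symm))) h
  · rw [sz_eq_ncard_cluster, sz_eq_ncard_cluster,
      ← (hφ1.mono (cluster_subset_leafSet _)).ncard_image,
      ← (hφ2.mono (cluster_subset_leafSet _)).ncard_image, hp]
  · rw [incomp_iff_disjoint_cluster, incomp_iff_disjoint_cluster,
      ← hφ1.disjoint_image_iff (cluster_subset_leafSet _) (cluster_subset_leafSet _),
      ← hφ2.disjoint_image_iff (cluster_subset_leafSet _) (cluster_subset_leafSet _), hp, hq]

lemma ncard_inter_clusterSet (hb1 : T1.IsBinary) (hb2 : T2.IsBinary)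
    (hφ1 : InjOn φ1 T1.leafSet) (hφ2 : InjOn φ2 T2.leafSet) :
    (clusterSet T1 φ1 ∩ clusterSet T2 φ2).ncard = (agreeingPairs T1 T2 φ1 φ2).ncard := by
  have himage : (fun p => φ1 '' T1.cluster p.1) '' agreeingPairs T1 T2 φ1 φ2
      = clusterSet T1 φ1 ∩ clusterSet T2 φ2 := by
    ext C
    simp only [clusterSet_eq_range, agreeingPairs, mem_image, mem_inter_iff, mem_range,
      mem_ofPred_eq, Prod.exists]
    constructor
    · rintro ⟨u, v, huv, rfl⟩
      exact ⟨⟨u, rfl⟩, ⟨v, huv.symm⟩⟩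
    · rintro ⟨⟨u, rfl⟩, ⟨v, hv⟩⟩
      exact ⟨u, v, hv.symm, rfl⟩
  rw [← himage, InjOn.ncard_image]
  intro p hp q hq h
  have h1 := hb1.injective_image_cluster hφ1 h
  exact Prod.ext h1 (hb2.injective_image_cluster hφ2 (hp.symm.trans (h.trans hq)))

lemma dRF_add_two_mul_ncard_agreeingPairs (hb1 : T1.IsBinary) (hb2 : T2.IsBinary)
    (hφ1 : InjOn φ1 T1.leafSet) (hφ2 : InjOn φ2 T2.leafSet) :
    dRF T1 T2 φ1 φ2 + 2 * (agreeingPairs T1 T2 φ1 φ2).ncard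
      = Fintype.card T1.V + Fintype.card T2.V := by
  rw [← ncard_inter_clusterSet hb1 hb2 hφ1 hφ2, ← hb1.ncard_clusterSet hφ1,
    ← hb2.ncard_clusterSet hφ2, dRF, ← Set.symmDiff_def]
  exact ncard_symmDiff_add_two_mul_ncard_inter (clusterSet_finite T1 φ1) (clusterSet_finite T2 φ2)

variable (T1 T2) in
lemma bddAbove_ncard_consistentMatching :
    BddAbove {n | ∃ M : Set (T1.V × T2.V), ConsistentMatching T1 T2 M ∧ M.ncard = n} :=
  ⟨Nat.card (T1.V × T2.V), by rintro _ ⟨M, -, rfl⟩; exact ncard_le_card M⟩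

lemma ConsistentMatching.ncard_le_mu {M : Set (T1.V × T2.V)} (hM : ConsistentMatching T1 T2 M) :
    M.ncard ≤ mu T1 T2 :=
  le_csSup (bddAbove_ncard_consistentMatching T1 T2) ⟨M, hM, rfl⟩

variable (T1 T2) in
lemma exists_consistentMatching_ncard_eq_mu :
    ∃ M : Set (T1.V × T2.V), ConsistentMatching T1 T2 M ∧ M.ncard = mu T1 T2 :=
  Nat.sSup_mem (s := {n | ∃ M : Set (T1.V × T2.V), ConsistentMatching T1 T2 M ∧ M.ncard = n})
    ⟨0, ∅, by simp [ConsistentMatching]⟩ (bddAbove_ncard_consistentMatching T1 T2)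

/-- Matched vertices have equal sizes and sizes strictly grow along the ancestor chain, so
comparable matched vertices are matched the same way round. -/
lemma ConsistentMatching.desc_of_desc (hb2 : T2.IsBinary) {M : Set (T1.V × T2.V)}
    (hM : ConsistentMatching T1 T2 M) {p q : T1.V × T2.V} (hp : p ∈ M) (hq : q ∈ M)
    (h : T1.Desc p.1 q.1) : T2.Desc p.2 q.2 := by
  have hcomp : ¬ T2.Incomp p.2 q.2 := (hM.2.2 p hp q hq).not.1 fun hi => hi.1 h
  by_contra hpq
  have hqp : T2.Desc q.2 p.2 := by
    by_contra hqp
    exact hcomp ⟨hpq, hqp⟩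
  have hlt := hb2.sz_lt hqp fun e => hpq (e ▸ desc_refl _)
  have hle : T1.sz p.1 ≤ T1.sz q.1 := ncard_le_ncard h.cluster_subset
  rw [hM.2.1 p hp, hM.2.1 q hq] at hle
  omega

lemma ConsistentMatching.laminarCorrespondence (hb1 : T1.IsBinary) (hb2 : T2.IsBinary)
    {M : Set (T1.V × T2.V)} (hM : ConsistentMatching T1 T2 M) :
    LaminarCorrespondence ((fun p => (T1.cluster p.1, T2.cluster p.2)) '' M) where
  laminar := by
    rintro _ ⟨p, -, rfl⟩ _ ⟨q, -, rfl⟩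
    exact cluster_laminar p.1 q.1
  subset := by
    rintro _ ⟨p, hp, rfl⟩ _ ⟨q, hq, rfl⟩ h
    exact (hM.desc_of_desc hb2 hp hq (hb1.cluster_subset_cluster_iff.1 h)).cluster_subset
  disjoint := by
    rintro _ ⟨p, hp, rfl⟩ _ ⟨q, hq, rfl⟩ h
    exact incomp_iff_disjoint_cluster.1 ((hM.2.2 p hp q hq).1 (incomp_iff_disjoint_cluster.2 h))

/-- A leaf bijection carrying the matched clusters of a maximum matching onto each other,
followed by any labelling of the leaves of `T2`. -/
lemma exists_labelling_mu_le_ncard_agreeingPairs (hb1 : T1.IsBinary) (hb2 : T2.IsBinary)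
    (h : T1.nLeaves = T2.nLeaves) :
    ∃ φ1 : T1.V → Fin T1.nLeaves, ∃ φ2 : T2.V → Fin T1.nLeaves,
      BijOn φ1 T1.leafSet univ ∧ BijOn φ2 T2.leafSet univ ∧
      mu T1 T2 ≤ (agreeingPairs T1 T2 φ1 φ2).ncard := by
  obtain ⟨M, hM, hMμ⟩ := exists_consistentMatching_ncard_eq_mu T1 T2
  have hfin : ((fun p => (T1.cluster p.1, T2.cluster p.2)) '' M).Finite := toFinite _
  have : Nonempty T2.V := ⟨T2.root⟩
  obtain ⟨σ, hσ, hσM⟩ := LaminarCorrespondence.exists_bijOn hfin.toFinset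
    (by simpa using hM.laminarCorrespondence hb1 hb2) (toFinite _) (toFinite _) h
    (fun _ hp => by
      obtain ⟨p, -, rfl⟩ := hfin.mem_toFinset.1 hp
      exact ⟨cluster_subset_leafSet _, cluster_subset_leafSet _⟩)
    (fun _ hp => by
      obtain ⟨p, hpM, rfl⟩ := hfin.mem_toFinset.1 hp
      exact hM.2.1 p hpM)
  have : Nonempty (Fin T1.nLeaves) := ⟨⟨0, T1.nLeaves_pos⟩⟩
  obtain ⟨φ2, hφ2⟩ := T2.leafSet.toFinite.exists_bijOn_of_ncard_eq
    (t := (univ : Set (Fin T1.nLeaves))) finite_univ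
    (by rw [ncard_univ, Nat.card_eq_fintype_card, Fintype.card_fin]; exact h.symm)
  refine ⟨φ2 ∘ σ, φ2, hφ2.comp hσ, hφ2,
    hMμ ▸ ncard_le_ncard (fun p hp => ?_) (toFinite _)⟩
  change (φ2 ∘ σ) '' _ = _
  rw [image_comp, hσM (T1.cluster p.1, T2.cluster p.2) (hfin.mem_toFinset.2 ⟨p, hp, rfl⟩)]

end Matchings

/-- For two binary tree shapes with `n` leaves each, the minimum
Robinson–Foulds distance over all bijective leaf labellings equals
`4n - 2 - 2 μ(T1,T2)`. -/
theorem dRFstar_binary (T1 T2 : RTree) (n : ℕ)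
    (hb1 : T1.IsBinary) (hb2 : T2.IsBinary)
    (h1 : T1.nLeaves = n) (h2 : T2.nLeaves = n) :
    dRFstar T1 T2 = 4 * n - 2 - 2 * mu T1 T2 := by
  have hV1 := hb1.card_add_one
  have hV2 := hb2.card_add_one
  obtain ⟨φ1, φ2, hφ1, hφ2, hμ⟩ :=
    exists_labelling_mu_le_ncard_agreeingPairs hb1 hb2 (h1.trans h2.symm)
  have hdRF := dRF_add_two_mul_ncard_agreeingPairs hb1 hb2 hφ1.injOn hφ2.injOn
  have hle := (consistentMatching_agreeingPairs hb1 hb2 hφ1.injOn hφ2.injOn).ncard_le_mu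
  refine le_antisymm (Nat.sInf_le ⟨φ1, φ2, hφ1, hφ2, by omega⟩)
    (le_csInf ⟨_, φ1, φ2, hφ1, hφ2, rfl⟩ ?_)
  rintro _ ⟨ψ1, ψ2, hψ1, hψ2, rfl⟩
  have hdRF' := dRF_add_two_mul_ncard_agreeingPairs hb1 hb2 hψ1.injOn hψ2.injOn
  have hle' := (consistentMatching_agreeingPairs hb1 hb2 hψ1.injOn hψ2.injOn).ncard_le_mu
  omega
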